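/- arXiv:1711.02402 — 2 statements merged into one kernel-verified Lean document; each statement's English description precedes it below -/
import Mathlib

section
/- Suppose X(ρ,t) = (r(ρ,t), z(ρ,t)) is a smooth family of curves on [0,1] with z(0,t) = z(1,t) = 0 (boundary points on the substrate), and the normal velocity satisfies r (∂_t X · n) = ∂_s(r ∂_s μ) with ∂_s μ = 0 at both endpoints, where n = -(∂_s X)^⊥ and s is arc length. Then the volume V(t) = 2π ∫₀¹ r z ∂_ρ r dρ is constant in time. -/
open Real intervalIntegral

lemma hdFst (f : ℝ × ℝ → ℝ) (hf : ContDiff ℝ (⊤ : ℕ∞) f) (ρ t : ℝ) :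
    HasDerivAt (fun u => f (u, t)) (fderiv ℝ f (ρ, t) (1, 0)) ρ :=
  ((hf.differentiable (by simp) (ρ, t)).hasFDerivAt).comp_hasDerivAt ρ
    ((hasDerivAt_id ρ).prodMk (hasDerivAt_const ρ t))

lemma hdSnd (f : ℝ × ℝ → ℝ) (hf : ContDiff ℝ (⊤ : ℕ∞) f) (ρ t : ℝ) :
    HasDerivAt (fun τ => f (ρ, τ)) (fderiv ℝ f (ρ, t) (0, 1)) t :=
  ((hf.differentiable (by simp) (ρ, t)).hasFDerivAt).comp_hasDerivAt t
    ((hasDerivAt_const t ρ).prodMk (hasDerivAt_id t))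

lemma contDiff_fderiv_apply {f : ℝ × ℝ → ℝ} (hf : ContDiff ℝ (⊤ : ℕ∞) f) (v : ℝ × ℝ) :
    ContDiff ℝ (⊤ : ℕ∞) (fun p => fderiv ℝ f p v) :=
  (hf.fderiv_right (by simp)).clm_apply contDiff_const

lemma clairaut (f : ℝ × ℝ → ℝ) (hf : ContDiff ℝ (⊤ : ℕ∞) f) (p : ℝ × ℝ) (v w : ℝ × ℝ) :
    fderiv ℝ (fun q => fderiv ℝ f q v) p w = fderiv ℝ (fun q => fderiv ℝ f q w) p v := by
  have hd : ∀ y, HasFDerivAt f (fderiv ℝ f y) y := fun y =>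
    (hf.differentiable (by simp) y).hasFDerivAt
  have h1 : ContDiff ℝ (⊤ : ℕ∞) (fderiv ℝ f) := hf.fderiv_right (by simp)
  have hx : HasFDerivAt (fderiv ℝ f) (fderiv ℝ (fderiv ℝ f) p) p :=
    (h1.differentiable (by simp) p).hasFDerivAt
  have hsym := second_derivative_symmetric hd hx
  have ev : ∀ u : ℝ × ℝ, fderiv ℝ (fun q => fderiv ℝ f q u) p
      = (ContinuousLinearMap.apply ℝ ℝ u).comp (fderiv ℝ (fderiv ℝ f) p) :=
    fun u => (((ContinuousLinearMap.apply ℝ ℝ u).hasFDerivAt).comp p hx).fderiv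
  rw [ev v, ev w]
  simp only [ContinuousLinearMap.coe_comp', Function.comp_apply,
    ContinuousLinearMap.apply_apply]
  exact hsym w v

open MeasureTheory in
/-- Mass (volume) conservation: under surface-diffusion evolution
`r (∂_t X · n) = ∂_s (r ∂_s μ)` with zero-flux boundary conditions `∂_s μ = 0` at the
endpoints and substrate conditions `z(0,t) = z(1,t) = 0`, the volume of revolution
`V(t) = 2π ∫₀¹ r z ∂_ρ r dρ` is constant in time. -/
theorem volume_conservation (T : ℝ) (hT : 0 < T)
    (r z μ : ℝ → ℝ → ℝ)
    (hr : ContDiff ℝ (⊤ : ℕ∞) (Function.uncurry r)) (hz : ContDiff ℝ (⊤ : ℕ∞) (Function.uncurry z))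
    (hμ : ContDiff ℝ (⊤ : ℕ∞) (Function.uncurry μ))
    (hrpos : ∀ ρ t, 0 ≤ r ρ t)
    -- regularity of the parametrization: |∂_ρ X| > 0
    (J : ℝ → ℝ → ℝ)
    (hJ : ∀ ρ t, J ρ t
      = Real.sqrt ((deriv (fun u => r u t) ρ) ^ 2 + (deriv (fun u => z u t) ρ) ^ 2))
    (hJpos : ∀ ρ t, 0 < J ρ t)
    -- substrate boundary conditions
    (hbz : ∀ t, z 0 t = 0 ∧ z 1 t = 0)
    -- evolution equation: r (∂_t X · n) = ∂_s (r ∂_s μ), with ∂_s = J⁻¹ ∂_ρ and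
    -- n = J⁻¹ (-∂_ρ z, ∂_ρ r)
    (hevol : ∀ t, ∀ ρ ∈ Set.Icc (0:ℝ) 1,
      r ρ t * ((J ρ t)⁻¹ *
        (-(deriv (fun u => z u t) ρ) * deriv (fun τ => r ρ τ) t
          + deriv (fun u => r u t) ρ * deriv (fun τ => z ρ τ) t))
      = (J ρ t)⁻¹ *
          deriv (fun u => r u t * ((J u t)⁻¹ * deriv (fun v => μ v t) u)) ρ)
    -- zero-flux boundary conditions: ∂_s μ = 0 at ρ = 0, 1
    (hflux : ∀ t, deriv (fun v => μ v t) 0 = 0 ∧ deriv (fun v => μ v t) 1 = 0) :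
    ∀ t ∈ Set.Icc (0:ℝ) T,
      2 * Real.pi * ∫ ρ in (0:ℝ)..1, r ρ t * z ρ t * deriv (fun u => r u t) ρ
        = 2 * Real.pi * ∫ ρ in (0:ℝ)..1, r ρ 0 * z ρ 0 * deriv (fun u => r u 0) ρ := by
  intro t ht
  have ht0 : (0:ℝ) ≤ t := ht.1
  -- rewrite all derivs as fderiv applications
  have hdr1 : ∀ (ρ τ : ℝ), deriv (fun u => r u τ) ρ
      = fderiv ℝ (Function.uncurry r) (ρ, τ) (1, 0) :=
    fun ρ τ => HasDerivAt.deriv (hdFst _ hr ρ τ)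
  have hdz1 : ∀ (ρ τ : ℝ), deriv (fun u => z u τ) ρ
      = fderiv ℝ (Function.uncurry z) (ρ, τ) (1, 0) :=
    fun ρ τ => HasDerivAt.deriv (hdFst _ hz ρ τ)
  have hdμ1 : ∀ (ρ τ : ℝ), deriv (fun u => μ u τ) ρ
      = fderiv ℝ (Function.uncurry μ) (ρ, τ) (1, 0) :=
    fun ρ τ => HasDerivAt.deriv (hdFst _ hμ ρ τ)
  have hdr2 : ∀ (ρ τ : ℝ), deriv (fun σ => r ρ σ) τ
      = fderiv ℝ (Function.uncurry r) (ρ, τ) (0, 1) :=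
    fun ρ τ => HasDerivAt.deriv (hdSnd _ hr ρ τ)
  have hdz2 : ∀ (ρ τ : ℝ), deriv (fun σ => z ρ σ) τ
      = fderiv ℝ (Function.uncurry z) (ρ, τ) (0, 1) :=
    fun ρ τ => HasDerivAt.deriv (hdSnd _ hz ρ τ)
  simp only [hdr1, hdz1, hdμ1, hdr2, hdz2] at hevol hflux hJ ⊢
  -- notation
  set R := Function.uncurry r with hRdef
  set Z := Function.uncurry z with hZdef
  set M := Function.uncurry μ with hMdef
  -- the time-derivative of the integrand
  set H : ℝ × ℝ → ℝ := fun p =>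
    (fderiv ℝ R p (0, 1) * z p.1 p.2 + r p.1 p.2 * fderiv ℝ Z p (0, 1)) * fderiv ℝ R p (1, 0)
      + r p.1 p.2 * z p.1 p.2 * fderiv ℝ (fun q => fderiv ℝ R q (1, 0)) p (0, 1) with hHdef
  -- continuity facts
  have cR : Continuous fun p : ℝ × ℝ => r p.1 p.2 := hr.continuous
  have cZ : Continuous fun p : ℝ × ℝ => z p.1 p.2 := hz.continuous
  have c1R : Continuous fun p : ℝ × ℝ => fderiv ℝ R p (1, 0) :=
    (contDiff_fderiv_apply hr (1, 0)).continuous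
  have c2R : Continuous fun p : ℝ × ℝ => fderiv ℝ R p (0, 1) :=
    (contDiff_fderiv_apply hr (0, 1)).continuous
  have c2Z : Continuous fun p : ℝ × ℝ => fderiv ℝ Z p (0, 1) :=
    (contDiff_fderiv_apply hz (0, 1)).continuous
  have c21R : Continuous fun p : ℝ × ℝ => fderiv ℝ (fun q => fderiv ℝ R q (1, 0)) p (0, 1) :=
    (contDiff_fderiv_apply (contDiff_fderiv_apply hr (1, 0)) (0, 1)).continuous
  have cH : Continuous H := by
    rw [hHdef]
    exact (((c2R.mul cZ).add (cR.mul c2Z)).mul c1R).add ((cR.mul cZ).mul c21R)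
  -- Step 1 : FTC in time
  have key1 : ∀ ρ : ℝ, (∫ σ in (0:ℝ)..t, H (ρ, σ))
      = r ρ t * z ρ t * fderiv ℝ R (ρ, t) (1, 0)
        - r ρ 0 * z ρ 0 * fderiv ℝ R (ρ, 0) (1, 0) := by
    intro ρ
    apply intervalIntegral.integral_eq_sub_of_hasDerivAt
    · intro σ _
      have h1 : HasDerivAt (fun σ => r ρ σ) (fderiv ℝ R (ρ, σ) (0, 1)) σ := hdSnd _ hr ρ σ
      have h2 : HasDerivAt (fun σ => z ρ σ) (fderiv ℝ Z (ρ, σ) (0, 1)) σ := hdSnd _ hz ρ σ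
      have h3 : HasDerivAt (fun σ => fderiv ℝ R (ρ, σ) (1, 0))
          (fderiv ℝ (fun q => fderiv ℝ R q (1, 0)) (ρ, σ) (0, 1)) σ :=
        hdSnd _ (contDiff_fderiv_apply hr (1, 0)) ρ σ
      exact (h1.mul h2).mul h3
    · exact (cH.comp (continuous_const.prodMk continuous_id)).intervalIntegrable 0 t
  -- Step 2 : FTC in space, using the evolution equation
  have key2 : ∀ σ : ℝ, (∫ ρ in (0:ℝ)..1, H (ρ, σ)) = 0 := by
    intro σ
    have hend : ∀ u : ℝ, u = 0 ∨ u = 1 →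
        r u σ * z u σ * fderiv ℝ R (u, σ) (0, 1)
          + r u σ * ((J u σ)⁻¹ * fderiv ℝ M (u, σ) (1, 0)) = 0 := by
      rintro u (rfl | rfl)
      · rw [(hbz σ).1, (hflux σ).1]; ring
      · rw [(hbz σ).2, (hflux σ).2]; ring
    have hG : ∀ ρ ∈ Set.uIcc (0:ℝ) 1,
        HasDerivAt (fun u => r u σ * z u σ * fderiv ℝ R (u, σ) (0, 1)
          + r u σ * ((J u σ)⁻¹ * fderiv ℝ M (u, σ) (1, 0))) (H (ρ, σ)) ρ := by
      intro ρ hρ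
      rw [Set.uIcc_of_le zero_le_one] at hρ
      -- first summand
      have h1 : HasDerivAt (fun u => r u σ) (fderiv ℝ R (ρ, σ) (1, 0)) ρ := hdFst _ hr ρ σ
      have h2 : HasDerivAt (fun u => z u σ) (fderiv ℝ Z (ρ, σ) (1, 0)) ρ := hdFst _ hz ρ σ
      have h3 : HasDerivAt (fun u => fderiv ℝ R (u, σ) (0, 1))
          (fderiv ℝ (fun q => fderiv ℝ R q (0, 1)) (ρ, σ) (1, 0)) ρ :=
        hdFst _ (contDiff_fderiv_apply hr (0, 1)) ρ σ
      have hA := (h1.mul h2).mul h3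
      -- second summand, via the evolution equation
      have hq : ∀ u : ℝ,
          0 < fderiv ℝ R (u, σ) (1, 0) ^ 2 + fderiv ℝ Z (u, σ) (1, 0) ^ 2 := by
        intro u
        have := hJpos u σ
        rw [hJ u σ] at this
        exact Real.sqrt_pos.1 this
      have hJd : DifferentiableAt ℝ (fun u => J u σ) ρ := by
        have hfun : (fun u => J u σ)
            = fun u => Real.sqrt (fderiv ℝ R (u, σ) (1, 0) ^ 2 + fderiv ℝ Z (u, σ) (1, 0) ^ 2) :=
          funext fun u => hJ u σ
        rw [hfun]
        have hin : DifferentiableAt ℝ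
            (fun u => fderiv ℝ R (u, σ) (1, 0) ^ 2 + fderiv ℝ Z (u, σ) (1, 0) ^ 2) ρ :=
          (((hdFst _ (contDiff_fderiv_apply hr (1, 0)) ρ σ).differentiableAt).pow 2).add
            (((hdFst _ (contDiff_fderiv_apply hz (1, 0)) ρ σ).differentiableAt).pow 2)
        exact hin.sqrt (ne_of_gt (hq ρ))
      have hgd : DifferentiableAt ℝ
          (fun u => r u σ * ((J u σ)⁻¹ * fderiv ℝ M (u, σ) (1, 0))) ρ :=
        (h1.differentiableAt).mul
          ((hJd.inv (ne_of_gt (hJpos ρ σ))).mul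
            ((hdFst _ (contDiff_fderiv_apply hμ (1, 0)) ρ σ).differentiableAt))
      have hBev := hevol σ ρ hρ
      have hJne : J ρ σ ≠ 0 := ne_of_gt (hJpos ρ σ)
      have hd : deriv (fun u => r u σ * ((J u σ)⁻¹ * fderiv ℝ M (u, σ) (1, 0))) ρ
          = r ρ σ * (-(fderiv ℝ Z (ρ, σ) (1, 0)) * fderiv ℝ R (ρ, σ) (0, 1)
              + fderiv ℝ R (ρ, σ) (1, 0) * fderiv ℝ Z (ρ, σ) (0, 1)) := by
        have h := hBev.symm
        field_simp at h ⊢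
        linarith [h]
      have hB : HasDerivAt (fun u => r u σ * ((J u σ)⁻¹ * fderiv ℝ M (u, σ) (1, 0)))
          (r ρ σ * (-(fderiv ℝ Z (ρ, σ) (1, 0)) * fderiv ℝ R (ρ, σ) (0, 1)
              + fderiv ℝ R (ρ, σ) (1, 0) * fderiv ℝ Z (ρ, σ) (0, 1))) ρ :=
        hd ▸ hgd.hasDerivAt
      have := hA.add hB
      refine this.congr_deriv ?_
      rw [hHdef]
      simp only [Pi.mul_apply]
      rw [clairaut _ hr (ρ, σ) (1, 0) (0, 1)]
      ring
    have hint : IntervalIntegrable (fun ρ => H (ρ, σ)) volume 0 1 :=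
      (cH.comp (continuous_id.prodMk continuous_const)).intervalIntegrable 0 1
    rw [intervalIntegral.integral_eq_sub_of_hasDerivAt hG hint,
      hend 1 (Or.inr rfl), hend 0 (Or.inl rfl), sub_zero]
  -- Step 3 : Fubini and conclusion
  have hFcont : ∀ τ : ℝ, Continuous fun ρ => r ρ τ * z ρ τ * fderiv ℝ R (ρ, τ) (1, 0) := by
    intro τ
    exact ((cR.mul cZ).mul c1R).comp (continuous_id.prodMk continuous_const)
  have hintF : ∀ τ : ℝ, IntervalIntegrable
      (fun ρ => r ρ τ * z ρ τ * fderiv ℝ R (ρ, τ) (1, 0)) volume 0 1 :=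
    fun τ => (hFcont τ).intervalIntegrable 0 1
  have hswap : (∫ ρ in (0:ℝ)..1, ∫ σ in (0:ℝ)..t, H (ρ, σ))
      = ∫ σ in (0:ℝ)..t, ∫ ρ in (0:ℝ)..1, H (ρ, σ) := by
    have hIcc : IntegrableOn H (Set.Icc (0:ℝ) 1 ×ˢ Set.Icc (0:ℝ) t) (volume.prod volume) := by
      rw [← Measure.volume_eq_prod ℝ ℝ]
      exact cH.continuousOn.integrableOn_compact (isCompact_Icc.prod isCompact_Icc)
    have hI : Integrable (Function.uncurry fun ρ σ => H (ρ, σ))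
        ((volume.restrict (Set.Ioc (0:ℝ) 1)).prod (volume.restrict (Set.Ioc (0:ℝ) t))) := by
      rw [Measure.prod_restrict]
      exact hIcc.mono_set (Set.prod_mono Set.Ioc_subset_Icc_self Set.Ioc_subset_Icc_self)
    calc (∫ ρ in (0:ℝ)..1, ∫ σ in (0:ℝ)..t, H (ρ, σ))
        = ∫ ρ in Set.Ioc (0:ℝ) 1, ∫ σ in Set.Ioc (0:ℝ) t, H (ρ, σ) := by
          rw [intervalIntegral.integral_of_le zero_le_one]
          exact setIntegral_congr_fun measurableSet_Ioc
            (fun ρ _ => intervalIntegral.integral_of_le ht0)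
      _ = ∫ σ in Set.Ioc (0:ℝ) t, ∫ ρ in Set.Ioc (0:ℝ) 1, H (ρ, σ) :=
          MeasureTheory.integral_integral_swap hI
      _ = ∫ σ in (0:ℝ)..t, ∫ ρ in (0:ℝ)..1, H (ρ, σ) := by
          rw [intervalIntegral.integral_of_le ht0]
          exact setIntegral_congr_fun measurableSet_Ioc
            (fun σ _ => (intervalIntegral.integral_of_le zero_le_one).symm)
  have main : (∫ ρ in (0:ℝ)..1, r ρ t * z ρ t * fderiv ℝ R (ρ, t) (1, 0))
      - (∫ ρ in (0:ℝ)..1, r ρ 0 * z ρ 0 * fderiv ℝ R (ρ, 0) (1, 0)) = 0 := by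
    rw [← intervalIntegral.integral_sub (hintF t) (hintF 0)]
    have : (∫ ρ in (0:ℝ)..1, (r ρ t * z ρ t * fderiv ℝ R (ρ, t) (1, 0)
        - r ρ 0 * z ρ 0 * fderiv ℝ R (ρ, 0) (1, 0)))
        = ∫ ρ in (0:ℝ)..1, ∫ σ in (0:ℝ)..t, H (ρ, σ) :=
      intervalIntegral.integral_congr fun ρ _ => (key1 ρ).symm
    rw [this, hswap]
    simp [key2]
  have := sub_eq_zero.1 main
  rw [this]
end

section
/- Under the evolution ∂_t X · n = (1/r) ∂_s(r ∂_s μ) with μ = (γ(θ)+γ''(θ))κ - (γ(θ) z_s + γ'(θ) r_s)/r, zero-flux boundary conditions ∂_s μ = 0 at both endpoints, relaxed contact angle conditions ∂_t r(L,t) = -η f(θ_d^o;σ), ∂_t r(0,t) = η f(θ_d^i;σ) with η > 0 and f(θ;σ) = γ(θ)cos θ - γ'(θ) sin θ - σ, and r ≥ 0, the total energy W(t) = 2π ∫₀^{L(t)} γ(θ) r ds - σπ(r(L,t)² - r(0,t)²) satisfies dW/dt = -2π ∫₀^{L(t)} r (∂_s μ)² ds - (2π/η)[r_o (dr_o/dt)²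 + r_i (dr_i/dt)²] ≤ 0. -/
open Real intervalIntegral

section EDHelpers
open MeasureTheory Filter Metric Set
open scoped Topology

namespace ED

lemma hasDerivAt_par1 {F : ℝ × ℝ → ℝ} (hF : Differentiable ℝ F) (s t : ℝ) :
    HasDerivAt (fun u => F (u, t)) (fderiv ℝ F (s, t) (1, 0)) s := by
  have hline : HasDerivAt (fun u : ℝ => (u, t)) ((1 : ℝ), (0 : ℝ)) s :=
    (hasDerivAt_id s).prodMk (hasDerivAt_const s t)
  simpa [Function.comp_def] using (hF (s, t)).hasFDerivAt.comp_hasDerivAt s hline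

lemma hasDerivAt_par2 {F : ℝ × ℝ → ℝ} (hF : Differentiable ℝ F) (s t : ℝ) :
    HasDerivAt (fun τ => F (s, τ)) (fderiv ℝ F (s, t) (0, 1)) t := by
  have hline : HasDerivAt (fun τ : ℝ => (s, τ)) ((0 : ℝ), (1 : ℝ)) t :=
    (hasDerivAt_const t s).prodMk (hasDerivAt_id t)
  simpa [Function.comp_def] using (hF (s, t)).hasFDerivAt.comp_hasDerivAt t hline

lemma contDiff_pd {F : ℝ × ℝ → ℝ} (hF : ContDiff ℝ (⊤ : ℕ∞) F) (v : ℝ × ℝ) :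
    ContDiff ℝ (⊤ : ℕ∞) (fun q => fderiv ℝ F q v) :=
  (hF.fderiv_right (by simp)).clm_apply contDiff_const

lemma clairaut {F : ℝ × ℝ → ℝ} (hF : ContDiff ℝ (⊤ : ℕ∞) F) (q v w : ℝ × ℝ) :
    fderiv ℝ (fun p => fderiv ℝ F p v) q w = fderiv ℝ (fun p => fderiv ℝ F p w) q v := by
  have hD : Differentiable ℝ (fderiv ℝ F) := (hF.fderiv_right (m := (⊤ : ℕ∞)) (by simp)).differentiable (by simp)
  have h1 : fderiv ℝ (fun p => fderiv ℝ F p v) q w = fderiv ℝ (fderiv ℝ F) q w v := by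
    rw [fderiv_clm_apply (hD q) (differentiableAt_const v)]
    simp
  have h2 : fderiv ℝ (fun p => fderiv ℝ F p w) q v = fderiv ℝ (fderiv ℝ F) q v w := by
    rw [fderiv_clm_apply (hD q) (differentiableAt_const w)]
    simp
  rw [h1, h2]
  exact (hF.contDiffAt.isSymmSndFDerivAt (by simp [minSmoothness_of_isRCLikeNormedField]; exact WithTop.coe_le_coe.mpr le_top)).eq w v

lemma contDiff_pd_one {F : ℝ × ℝ → ℝ} (hF : ContDiff ℝ 1 F) (v : ℝ × ℝ) :
    Continuous (fun q => fderiv ℝ F q v) :=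
  (((hF.fderiv_right (m := 0) (by norm_num)).clm_apply contDiff_const)).continuous

lemma leibniz {F : ℝ × ℝ → ℝ} (hF : ContDiff ℝ 1 F) {L : ℝ → ℝ} (hL : ContDiff ℝ (⊤ : ℕ∞) L)
    (hLpos : ∀ τ, 0 < L τ) (t : ℝ) :
    HasDerivAt (fun τ => ∫ s in (0:ℝ)..(L τ), F (s, τ))
      (F (L t, t) * deriv L t + ∫ s in (0:ℝ)..(L t), fderiv ℝ F (s, t) (0, 1)) t := by
  have hFd : Differentiable ℝ F := hF.differentiable one_ne_zero
  have hLd : Differentiable ℝ L := hL.differentiable (by simp)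
  set Λ := L t with hΛ
  set Λ' := deriv L t with hΛ'
  have hΛ0 : Λ ≠ 0 := ne_of_gt (hLpos t)
  -- reparametrized integrand
  set G2 : ℝ × ℝ → ℝ := fun q => L q.2 * F (L q.2 * q.1, q.2) with hG2
  have hG2c : ContDiff ℝ 1 G2 := by
    have h1 : ContDiff ℝ 1 (fun q : ℝ × ℝ => L q.2) := (hL.of_le (by simp)).comp contDiff_snd
    exact h1.mul (hF.comp ((h1.mul contDiff_fst).prodMk contDiff_snd))
  have hG2d : Differentiable ℝ G2 := hG2c.differentiable one_ne_zero
  -- rewrite the function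
  have hfun : (fun τ => ∫ s in (0:ℝ)..(L τ), F (s, τ))
      = fun τ => ∫ u in (0:ℝ)..(1:ℝ), G2 (u, τ) := by
    funext τ
    have hc : L τ ≠ 0 := ne_of_gt (hLpos τ)
    have := intervalIntegral.integral_comp_mul_left (a := (0:ℝ)) (b := (1:ℝ))
      (fun x => F (x, τ)) hc
    simp only [mul_zero, mul_one] at this
    rw [hG2]
    simp only []
    rw [intervalIntegral.integral_const_mul, this, smul_eq_mul, ← mul_assoc,
      mul_inv_cancel₀ hc, one_mul]
  -- derivative of the reparametrized integral via dominated convergence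
  set g' : ℝ → ℝ → ℝ := fun τ u => fderiv ℝ G2 (u, τ) (0, 1) with hg'
  have hcont' : Continuous (fun q : ℝ × ℝ => fderiv ℝ G2 q (0, 1)) :=
    contDiff_pd_one hG2c ((0:ℝ),(1:ℝ))
  obtain ⟨C, hC⟩ : ∃ C, ∀ p ∈ (Icc (0:ℝ) 1 ×ˢ Icc (t-1) (t+1)),
      ‖fderiv ℝ G2 (p.1, p.2) (0, 1)‖ ≤ C := by
    obtain ⟨C, hC⟩ := (isCompact_Icc.prod isCompact_Icc).exists_bound_of_continuousOn
      (hcont'.comp (continuous_fst.prodMk continuous_snd)).continuousOn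
    exact ⟨C, fun p hp => hC p hp⟩
  have key := intervalIntegral.hasDerivAt_integral_of_dominated_loc_of_deriv_le
    (μ := volume) (F := fun τ u => G2 (u, τ)) (F' := fun τ u => g' τ u) (x₀ := t)
    (a := (0:ℝ)) (b := 1) (bound := fun _ => C) (s := Metric.ball t 1) (Metric.ball_mem_nhds t one_pos)
    (Eventually.of_forall fun τ =>
      ((hG2c.continuous.comp (continuous_id.prodMk continuous_const)).aestronglyMeasurable))
    ((hG2c.continuous.comp (continuous_id.prodMk continuous_const)).intervalIntegrable 0 1)
    (((hcont'.comp (continuous_id.prodMk continuous_const)).aestronglyMeasurable))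
    (Eventually.of_forall fun u hu x hx => by
      have hu' : u ∈ Icc (0:ℝ) 1 := by
        rcases hu with hu
        simp only [Set.uIoc_of_le (by norm_num : (0:ℝ) ≤ 1)] at hu
        exact ⟨le_of_lt hu.1, hu.2⟩
      have hx' : x ∈ Icc (t-1) (t+1) := by
        rw [Metric.mem_ball, Real.dist_eq, abs_lt] at hx
        constructor <;> linarith [hx.1, hx.2]
      exact hC (u, x) ⟨hu', hx'⟩)
    (intervalIntegrable_const)
    (Eventually.of_forall fun u hu x hx => hasDerivAt_par2 hG2d u x)
  obtain ⟨-, hderiv⟩ := key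
  rw [hfun]
  refine hderiv.congr_deriv ?_
  -- identify the integral of the parametric derivative
  have hΛ'u : ∀ u : ℝ, HasDerivAt (fun τ => L τ * F (L τ * u, τ))
      (Λ' * F (Λ * u, t) + Λ * (fderiv ℝ F (Λ * u, t) (Λ' * u, 1))) t := by
    intro u
    have hLt : HasDerivAt L Λ' t := hLd.differentiableAt.hasDerivAt
    have hcurve : HasDerivAt (fun τ => ((L τ * u, τ) : ℝ × ℝ)) ((Λ' * u, 1) : ℝ × ℝ) t :=
      (hLt.mul_const u).prodMk (hasDerivAt_id t)
    have hFc : HasDerivAt (fun τ => F (L τ * u, τ)) (fderiv ℝ F (Λ * u, t) (Λ' * u, 1)) t := by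
      simpa [Function.comp_def] using (hFd (L t * u, t)).hasFDerivAt.comp_hasDerivAt_of_eq t hcurve rfl
    exact hLt.mul hFc
  have hg'eq : ∀ u : ℝ, g' t u
      = Λ' * F (Λ * u, t) + Λ * (Λ' * u * fderiv ℝ F (Λ * u, t) (1, 0))
        + Λ * fderiv ℝ F (Λ * u, t) (0, 1) := by
    intro u
    have h1 : HasDerivAt (fun τ => G2 (u, τ)) (g' t u) t := by
      have hline : HasDerivAt (fun τ : ℝ => (u, τ)) ((0 : ℝ), (1 : ℝ)) t :=
        (hasDerivAt_const t u).prodMk (hasDerivAt_id t)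
      simpa [hg', Function.comp_def] using (hG2d (u, t)).hasFDerivAt.comp_hasDerivAt t hline
    have h2 := hΛ'u u
    have h3 : (fun τ => G2 (u, τ)) = fun τ => L τ * F (L τ * u, τ) := rfl
    rw [h3] at h1
    have := h1.unique h2
    rw [this]
    have hv : ((Λ' * u, 1) : ℝ × ℝ) = (Λ' * u) • ((1:ℝ), (0:ℝ)) + ((0:ℝ),(1:ℝ)) := by
      simp [Prod.ext_iff]
    rw [hv, ContinuousLinearMap.map_add, ContinuousLinearMap.map_smul, smul_eq_mul]
    ring
  have hcF : Continuous fun u : ℝ => F (Λ * u, t) :=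
    hF.continuous.comp ((continuous_const.mul continuous_id).prodMk continuous_const)
  have hcP1 : Continuous fun u : ℝ => fderiv ℝ F (Λ * u, t) ((1:ℝ), (0:ℝ)) :=
    (contDiff_pd_one hF ((1:ℝ),(0:ℝ))).comp
      ((continuous_const.mul continuous_id).prodMk continuous_const)
  have hcP2 : Continuous fun u : ℝ => fderiv ℝ F (Λ * u, t) ((0:ℝ), (1:ℝ)) :=
    (contDiff_pd_one hF ((0:ℝ),(1:ℝ))).comp
      ((continuous_const.mul continuous_id).prodMk continuous_const)
  have hFTC : ∫ u in (0:ℝ)..1, (F (Λ * u, t) + u * (Λ * fderiv ℝ F (Λ * u, t) (1, 0)))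
      = F (Λ, t) := by
    have hd : ∀ u ∈ uIcc (0:ℝ) 1, HasDerivAt (fun v => v * F (Λ * v, t))
        (F (Λ * u, t) + u * (Λ * fderiv ℝ F (Λ * u, t) (1, 0))) u := by
      intro u _
      have hcurve : HasDerivAt (fun v : ℝ => ((Λ * v, t) : ℝ × ℝ)) ((Λ, 0) : ℝ × ℝ) u := by
        simpa using (((hasDerivAt_id u).const_mul Λ).prodMk (hasDerivAt_const u t))
      have hcomp : HasDerivAt (fun v => F (Λ * v, t)) (Λ * fderiv ℝ F (Λ * u, t) (1, 0)) u := by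
        have h := (hFd (Λ * u, t)).hasFDerivAt.comp_hasDerivAt_of_eq u hcurve rfl
        have hv : ((Λ, 0) : ℝ × ℝ) = Λ • ((1:ℝ), (0:ℝ)) := by simp [Prod.ext_iff]
        rw [hv, ContinuousLinearMap.map_smul, smul_eq_mul] at h
        simpa [Function.comp_def] using h
      exact ((hasDerivAt_id u).mul hcomp).congr_deriv (by simp)
    have hint : IntervalIntegrable
        (fun u => F (Λ * u, t) + u * (Λ * fderiv ℝ F (Λ * u, t) (1, 0))) volume 0 1 :=
      (hcF.add (continuous_id.mul (continuous_const.mul hcP1))).intervalIntegrable 0 1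
    have := intervalIntegral.integral_eq_sub_of_hasDerivAt hd hint
    simpa using this
  have hsub2 : ∫ u in (0:ℝ)..1, fderiv ℝ F (Λ * u, t) (0, 1)
      = Λ⁻¹ * ∫ s in (0:ℝ)..Λ, fderiv ℝ F (s, t) (0, 1) := by
    have := intervalIntegral.integral_comp_mul_left (a := (0:ℝ)) (b := 1)
      (fun s => fderiv ℝ F (s, t) (0, 1)) hΛ0
    simpa [smul_eq_mul] using this
  have hfinal : (∫ u in (0:ℝ)..1, g' t u)
      = F (Λ, t) * Λ' + ∫ s in (0:ℝ)..Λ, fderiv ℝ F (s, t) (0, 1) := by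
    have hcongr : Set.EqOn (g' t)
        (fun u => Λ' * (F (Λ * u, t) + u * (Λ * fderiv ℝ F (Λ * u, t) (1, 0)))
          + Λ * fderiv ℝ F (Λ * u, t) (0, 1)) (uIcc (0:ℝ) 1) := by
      intro u _
      rw [hg'eq u]
      ring
    have hi1 : IntervalIntegrable
        (fun u : ℝ => Λ' * (F (Λ * u, t) + u * (Λ * fderiv ℝ F (Λ * u, t) (1, 0))))
        volume 0 1 :=
      Continuous.intervalIntegrable
        (by exact continuous_const.mul (hcF.add (continuous_id.mul
          (continuous_const.mul hcP1)))) 0 1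
    have hi2 : IntervalIntegrable
        (fun u : ℝ => Λ * fderiv ℝ F (Λ * u, t) (0, 1)) volume 0 1 :=
      Continuous.intervalIntegrable (by exact continuous_const.mul hcP2) 0 1
    rw [intervalIntegral.integral_congr hcongr, intervalIntegral.integral_add hi1 hi2,
      intervalIntegral.integral_const_mul, intervalIntegral.integral_const_mul,
      hFTC, hsub2, ← mul_assoc, mul_inv_cancel₀ hΛ0, one_mul]
    ring
  rw [hfinal]


lemma fderiv_pair (f : ℝ × ℝ → ℝ) (q : ℝ × ℝ) (a : ℝ) :
    fderiv ℝ f q ((a, 1) : ℝ × ℝ) = a * fderiv ℝ f q (1, 0) + fderiv ℝ f q (0, 1) := by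
  have hv : ((a, 1) : ℝ × ℝ) = a • ((1:ℝ), (0:ℝ)) + ((0:ℝ), (1:ℝ)) := by simp [Prod.ext_iff]
  rw [hv, ContinuousLinearMap.map_add, ContinuousLinearMap.map_smul, smul_eq_mul]

lemma clairaut' {F : ℝ × ℝ → ℝ} (hF : ContDiff ℝ (⊤ : ℕ∞) F) (s t : ℝ) :
    deriv (fun τ => fderiv ℝ F (s, τ) (1, 0)) t
      = deriv (fun u => fderiv ℝ F (u, t) (0, 1)) s := by
  have h1 := (hasDerivAt_par2 (F := fun q => fderiv ℝ F q (1, 0))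
    ((contDiff_pd hF ((1:ℝ),(0:ℝ))).differentiable (by simp)) s t).deriv
  have h2 := (hasDerivAt_par1 (F := fun q => fderiv ℝ F q (0, 1))
    ((contDiff_pd hF ((0:ℝ),(1:ℝ))).differentiable (by simp)) s t).deriv
  rw [h1, h2, clairaut hF (s, t) ((1:ℝ),(0:ℝ)) ((0:ℝ),(1:ℝ))]

lemma hasDerivAt_alongL {F : ℝ × ℝ → ℝ} (hF : Differentiable ℝ F) {L : ℝ → ℝ}
    (hL : Differentiable ℝ L) (t : ℝ) :
    HasDerivAt (fun τ => F (L τ, τ)) (fderiv ℝ F (L t, t) ((deriv L t, 1) : ℝ × ℝ)) t := by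
  have hcurve : HasDerivAt (fun τ : ℝ => ((L τ, τ) : ℝ × ℝ)) ((deriv L t, 1) : ℝ × ℝ) t :=
    (hL.differentiableAt.hasDerivAt).prodMk (hasDerivAt_id t)
  simpa [Function.comp_def] using (hF (L t, t)).hasFDerivAt.comp_hasDerivAt_of_eq t hcurve rfl

end ED

end EDHelpers

open ED Function

set_option maxHeartbeats 3200000

/-- Energy dissipation for the axisymmetric solid-state dewetting model: under surface
diffusion `∂_t X · n = (1/r) ∂_s(r ∂_s μ)` with
`μ = (γ(θ)+γ''(θ))κ - (γ(θ) z_s + γ'(θ) r_s)/r`, zero-flux boundary conditions and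
relaxed contact angle conditions, the total energy
`W(t) = 2π ∫₀^{L(t)} γ(θ) r ds - σπ (r_o² - r_i²)` satisfies
`W'(t) = -2π ∫₀^{L(t)} r (∂_s μ)² ds - (2π/η)[r_o (r_o')² + r_i (r_i')²] ≤ 0`. -/
theorem energy_dissipation
    (r z θ κ μ : ℝ → ℝ → ℝ) (L : ℝ → ℝ) (γ : ℝ → ℝ) (σ η : ℝ)
    (hγ : ContDiff ℝ 2 γ) (hη : 0 < η)
    (hr : ContDiff ℝ (⊤ : ℕ∞) (Function.uncurry r)) (hz : ContDiff ℝ (⊤ : ℕ∞) (Function.uncurry z))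
    (hθ : ContDiff ℝ (⊤ : ℕ∞) (Function.uncurry θ)) (hμ : ContDiff ℝ (⊤ : ℕ∞) (Function.uncurry μ))
    (hL : ContDiff ℝ (⊤ : ℕ∞) L) (hLpos : ∀ t, 0 < L t)
    (hrpos : ∀ s t, 0 ≤ r s t)
    -- arc-length parametrization and tangent angle: (r_s, z_s) = (cos θ, sin θ)
    (hang : ∀ t, ∀ s ∈ Set.Icc 0 (L t),
      deriv (fun u => r u t) s = Real.cos (θ s t) ∧
      deriv (fun u => z u t) s = Real.sin (θ s t))
    -- curvature κ = -X_ss · n with n = (-z_s, r_s)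
    (hκ : ∀ t, ∀ s ∈ Set.Icc 0 (L t),
      κ s t = -(deriv (deriv (fun u => r u t)) s * (-(deriv (fun u => z u t) s))
                + deriv (deriv (fun u => z u t)) s * deriv (fun u => r u t) s))
    -- chemical potential
    (hchem : ∀ t, ∀ s ∈ Set.Icc 0 (L t),
      μ s t = (γ (θ s t) + deriv (deriv γ) (θ s t)) * κ s t
        - (γ (θ s t) * deriv (fun u => z u t) s
            + deriv γ (θ s t) * deriv (fun u => r u t) s) / r s t)
    -- surface diffusion evolution: ∂_t X · n = (1/r) ∂_s (r ∂_s μ)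
    (hevol : ∀ t, ∀ s ∈ Set.Icc 0 (L t),
      -(deriv (fun u => z u t) s) * deriv (fun τ => r s τ) t
        + deriv (fun u => r u t) s * deriv (fun τ => z s τ) t
      = (r s t)⁻¹ * deriv (fun u => r u t * deriv (fun v => μ v t) u) s)
    -- zero-flux boundary conditions
    (hflux : ∀ t, deriv (fun v => μ v t) 0 = 0 ∧ deriv (fun v => μ v t) (L t) = 0)
    -- contact points stay on the substrate
    (hsub : ∀ t, z 0 t = 0 ∧ z (L t) t = 0)
    -- relaxed contact angle conditions, with f(θ;σ) = γ(θ) cos θ - γ'(θ) sin θ - σ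
    (hclo : ∀ t, deriv (fun τ => r (L τ) τ) t
      = -η * (γ (θ (L t) t) * Real.cos (θ (L t) t)
              - deriv γ (θ (L t) t) * Real.sin (θ (L t) t) - σ))
    (hcli : ∀ t, deriv (fun τ => r 0 τ) t
      = η * (γ (θ 0 t) * Real.cos (θ 0 t)
              - deriv γ (θ 0 t) * Real.sin (θ 0 t) - σ)) :
    ∀ t,
      deriv (fun τ => 2 * Real.pi * (∫ s in (0:ℝ)..(L τ), γ (θ s τ) * r s τ)
        - σ * Real.pi * ((r (L τ) τ) ^ 2 - (r 0 τ) ^ 2)) t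
      = -(2 * Real.pi) * (∫ s in (0:ℝ)..(L t), r s t * (deriv (fun v => μ v t) s) ^ 2)
        - (2 * Real.pi / η) * (r (L t) t * (deriv (fun τ => r (L τ) τ) t) ^ 2
            + r 0 t * (deriv (fun τ => r 0 τ) t) ^ 2) ∧
      deriv (fun τ => 2 * Real.pi * (∫ s in (0:ℝ)..(L τ), γ (θ s τ) * r s τ)
        - σ * Real.pi * ((r (L τ) τ) ^ 2 - (r 0 τ) ^ 2)) t ≤ 0 := by
  intro t
  -- basic differentiability
  have hrd : Differentiable ℝ (uncurry r) := hr.differentiable (by simp)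
  have hzd : Differentiable ℝ (uncurry z) := hz.differentiable (by simp)
  have hθd : Differentiable ℝ (uncurry θ) := hθ.differentiable (by simp)
  have hμd : Differentiable ℝ (uncurry μ) := hμ.differentiable (by simp)
  have hLd : Differentiable ℝ L := hL.differentiable (by simp)
  have hγd : Differentiable ℝ γ := hγ.differentiable two_ne_zero
  have hγ1 : ContDiff ℝ 1 (deriv γ) := by
    have h2 : ContDiff ℝ ((1 : ℕ) + 1) γ := by exact_mod_cast hγ
    exact (contDiff_succ_iff_deriv.mp h2).2.2
  have hγ1d : Differentiable ℝ (deriv γ) := hγ1.differentiable one_ne_zero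
  have hγ2c : Continuous (deriv (deriv γ)) := by
    have h2 : ContDiff ℝ ((0 : ℕ) + 1) (deriv γ) := by exact_mod_cast hγ1
    exact ((contDiff_succ_iff_deriv.mp h2).2.2).continuous
  set Λ := L t with hΛdef
  set Λ' := deriv L t with hΛ'def
  have hΛpos : 0 < Λ := hLpos t
  -- one-variable atoms (at the fixed time t)
  set R1 : ℝ → ℝ := fun s => fderiv ℝ (uncurry r) (s, t) (1, 0) with hR1def
  set R2 : ℝ → ℝ := fun s => fderiv ℝ (uncurry r) (s, t) (0, 1) with hR2def
  set Z1 : ℝ → ℝ := fun s => fderiv ℝ (uncurry z) (s, t) (1, 0) with hZ1def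
  set Z2 : ℝ → ℝ := fun s => fderiv ℝ (uncurry z) (s, t) (0, 1) with hZ2def
  set Θ1 : ℝ → ℝ := fun s => fderiv ℝ (uncurry θ) (s, t) (1, 0) with hΘ1def
  set Θ2 : ℝ → ℝ := fun s => fderiv ℝ (uncurry θ) (s, t) (0, 1) with hΘ2def
  set U1 : ℝ → ℝ := fun s => fderiv ℝ (uncurry μ) (s, t) (1, 0) with hU1def
  set R11 : ℝ → ℝ := fun s => fderiv ℝ (fun q => fderiv ℝ (uncurry r) q (1, 0)) (s, t) (1, 0)
    with hR11def
  set Z11 : ℝ → ℝ := fun s => fderiv ℝ (fun q => fderiv ℝ (uncurry z) q (1, 0)) (s, t) (1, 0)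
    with hZ11def
  set R21 : ℝ → ℝ := fun s => fderiv ℝ (fun q => fderiv ℝ (uncurry r) q (0, 1)) (s, t) (1, 0)
    with hR21def
  set Z21 : ℝ → ℝ := fun s => fderiv ℝ (fun q => fderiv ℝ (uncurry z) q (0, 1)) (s, t) (1, 0)
    with hZ21def
  set U11 : ℝ → ℝ := fun s => fderiv ℝ (fun q => fderiv ℝ (uncurry μ) q (1, 0)) (s, t) (1, 0)
    with hU11def
  -- HasDerivAt facts
  have hR1h : ∀ s, HasDerivAt (fun u => r u t) (R1 s) s := fun s => hasDerivAt_par1 hrd s t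
  have hZ1h : ∀ s, HasDerivAt (fun u => z u t) (Z1 s) s := fun s => hasDerivAt_par1 hzd s t
  have hΘ1h : ∀ s, HasDerivAt (fun u => θ u t) (Θ1 s) s := fun s => hasDerivAt_par1 hθd s t
  have hU1h : ∀ s, HasDerivAt (fun v => μ v t) (U1 s) s := fun s => hasDerivAt_par1 hμd s t
  have hR2h : ∀ s, HasDerivAt (fun τ => r s τ) (R2 s) t := fun s => hasDerivAt_par2 hrd s t
  have hZ2h : ∀ s, HasDerivAt (fun τ => z s τ) (Z2 s) t := fun s => hasDerivAt_par2 hzd s t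
  have hΘ2h : ∀ s, HasDerivAt (fun τ => θ s τ) (Θ2 s) t := fun s => hasDerivAt_par2 hθd s t
  have hR11h : ∀ s, HasDerivAt R1 (R11 s) s := fun s =>
    hasDerivAt_par1 ((contDiff_pd hr ((1:ℝ),(0:ℝ))).differentiable (by simp)) s t
  have hZ11h : ∀ s, HasDerivAt Z1 (Z11 s) s := fun s =>
    hasDerivAt_par1 ((contDiff_pd hz ((1:ℝ),(0:ℝ))).differentiable (by simp)) s t
  have hR21h : ∀ s, HasDerivAt R2 (R21 s) s := fun s =>
    hasDerivAt_par1 ((contDiff_pd hr ((0:ℝ),(1:ℝ))).differentiable (by simp)) s t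
  have hZ21h : ∀ s, HasDerivAt Z2 (Z21 s) s := fun s =>
    hasDerivAt_par1 ((contDiff_pd hz ((0:ℝ),(1:ℝ))).differentiable (by simp)) s t
  have hU11h : ∀ s, HasDerivAt U1 (U11 s) s := fun s =>
    hasDerivAt_par1 ((contDiff_pd hμ ((1:ℝ),(0:ℝ))).differentiable (by simp)) s t
  -- deriv identifications
  have hR1eq : (deriv fun u => r u t) = R1 := funext fun s => (hR1h s).deriv
  have hZ1eq : (deriv fun u => z u t) = Z1 := funext fun s => (hZ1h s).deriv
  have hU1eq : (deriv fun v => μ v t) = U1 := funext fun s => (hU1h s).deriv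
  -- continuity of atoms
  have hcR1 : Continuous R1 := ((contDiff_pd hr _).continuous).comp
    (continuous_id.prodMk continuous_const)
  have hcR2 : Continuous R2 := ((contDiff_pd hr _).continuous).comp
    (continuous_id.prodMk continuous_const)
  have hcZ1 : Continuous Z1 := ((contDiff_pd hz _).continuous).comp
    (continuous_id.prodMk continuous_const)
  have hcZ2 : Continuous Z2 := ((contDiff_pd hz _).continuous).comp
    (continuous_id.prodMk continuous_const)
  have hcΘ1 : Continuous Θ1 := ((contDiff_pd hθ _).continuous).comp
    (continuous_id.prodMk continuous_const)
  have hcΘ2 : Continuous Θ2 := ((contDiff_pd hθ _).continuous).comp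
    (continuous_id.prodMk continuous_const)
  have hcU1 : Continuous U1 := ((contDiff_pd hμ _).continuous).comp
    (continuous_id.prodMk continuous_const)
  have hcR11 : Continuous R11 := ((contDiff_pd (contDiff_pd hr _) _).continuous).comp
    (continuous_id.prodMk continuous_const)
  have hcZ11 : Continuous Z11 := ((contDiff_pd (contDiff_pd hz _) _).continuous).comp
    (continuous_id.prodMk continuous_const)
  have hcR21 : Continuous R21 := ((contDiff_pd (contDiff_pd hr _) _).continuous).comp
    (continuous_id.prodMk continuous_const)
  have hcZ21 : Continuous Z21 := ((contDiff_pd (contDiff_pd hz _) _).continuous).comp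
    (continuous_id.prodMk continuous_const)
  have hcU11 : Continuous U11 := ((contDiff_pd (contDiff_pd hμ _) _).continuous).comp
    (continuous_id.prodMk continuous_const)
  have hcr : Continuous (fun s => r s t) :=
    hr.continuous.comp (continuous_id.prodMk continuous_const)
  have hcz : Continuous (fun s => z s t) :=
    hz.continuous.comp (continuous_id.prodMk continuous_const)
  have hcθ : Continuous (fun s => θ s t) :=
    hθ.continuous.comp (continuous_id.prodMk continuous_const)
  have hcμ : Continuous (fun s => μ s t) :=
    hμ.continuous.comp (continuous_id.prodMk continuous_const)
  -- derived quantities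
  set V : ℝ → ℝ := fun s => -(Z1 s) * R2 s + R1 s * Z2 s with hVdef
  set T : ℝ → ℝ := fun s => R1 s * R2 s + Z1 s * Z2 s with hTdef
  set Φ : ℝ → ℝ := fun s => deriv γ (θ s t) * (r s t * V s) + γ (θ s t) * (r s t * T s)
    with hΦdef
  set Ψ : ℝ → ℝ := fun s =>
    (deriv (deriv γ) (θ s t) * Θ1 s) * (r s t * V s)
    + deriv γ (θ s t) * (R1 s * V s
        + r s t * (-(Z11 s * R2 s + Z1 s * R21 s) + (R11 s * Z2 s + R1 s * Z21 s)))
    + (deriv γ (θ s t) * Θ1 s) * (r s t * T s)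
    + γ (θ s t) * (R1 s * T s
        + r s t * ((R11 s * R2 s + R1 s * R21 s) + (Z11 s * Z2 s + Z1 s * Z21 s))) with hΨdef
  set Ξ : ℝ → ℝ := fun s => U1 s * (r s t * U1 s) + μ s t * (R1 s * U1 s + r s t * U11 s)
    with hΞdef
  set D : ℝ → ℝ := fun s => deriv γ (θ s t) * Θ2 s * r s t + γ (θ s t) * R2 s with hDdef
  have hcV : Continuous V := ((hcZ1.neg).mul hcR2).add (hcR1.mul hcZ2)
  have hcT : Continuous T := (hcR1.mul hcR2).add (hcZ1.mul hcZ2)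
  have hcΨ : Continuous Ψ := by
    exact (((((hγ2c.comp hcθ).mul hcΘ1).mul (hcr.mul hcV)).add
      (((hγ1.continuous.comp hcθ)).mul ((hcR1.mul hcV).add (hcr.mul
        ((((hcZ11.mul hcR2).add (hcZ1.mul hcR21)).neg).add
          ((hcR11.mul hcZ2).add (hcR1.mul hcZ21))))))).add
      (((hγ1.continuous.comp hcθ).mul hcΘ1).mul (hcr.mul hcT))).add
        ((hγ.continuous.comp hcθ).mul ((hcR1.mul hcT).add (hcr.mul
          (((hcR11.mul hcR2).add (hcR1.mul hcR21)).add
            ((hcZ11.mul hcZ2).add (hcZ1.mul hcZ21))))))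
  have hcΞ : Continuous Ξ := (hcU1.mul (hcr.mul hcU1)).add
    (hcμ.mul ((hcR1.mul hcU1).add (hcr.mul hcU11)))
  have hcD : Continuous D := (((hγ1.continuous.comp hcθ).mul hcΘ2).mul hcr).add
    ((hγ.continuous.comp hcθ).mul hcR2)
  -- (H1) derivative of Φ
  have hΦΨ : ∀ s, HasDerivAt Φ (Ψ s) s := by
    intro s
    have hθs := hΘ1h s
    have h1 : HasDerivAt (fun u => deriv γ (θ u t)) (deriv (deriv γ) (θ s t) * Θ1 s) s := by
      simpa [Function.comp_def] using ((hγ1d (θ s t)).hasDerivAt.comp s hθs)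
    have h2 : HasDerivAt (fun u => γ (θ u t)) (deriv γ (θ s t) * Θ1 s) s := by
      simpa [Function.comp_def] using ((hγd (θ s t)).hasDerivAt.comp s hθs)
    have hVd : HasDerivAt V ((-(Z11 s) * R2 s + -(Z1 s) * R21 s) + (R11 s * Z2 s + R1 s * Z21 s)) s :=
      (((hZ11h s).neg).mul (hR21h s)).add ((hR11h s).mul (hZ21h s))
    have hTd : HasDerivAt T ((R11 s * R2 s + R1 s * R21 s) + (Z11 s * Z2 s + Z1 s * Z21 s)) s :=
      ((hR11h s).mul (hR21h s)).add ((hZ11h s).mul (hZ21h s))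
    have h := (h1.mul ((hR1h s).mul hVd)).add (h2.mul ((hR1h s).mul hTd))
    rw [hΦdef, hΨdef]
    refine h.congr_deriv ?_
    simp only [Pi.mul_apply]
    ring
  
  -- (H2) derivative of M·(R·M')
  have hΞh : ∀ s, HasDerivAt (fun u => μ u t * (r u t * U1 u)) (Ξ s) s := fun s =>
    (hasDerivAt_par1 hμd s t).mul ((hR1h s).mul (hU11h s))
  -- (H3) Leibniz
  have hLeib : HasDerivAt (fun τ => ∫ s in (0:ℝ)..L τ, γ (θ s τ) * r s τ)
      (γ (θ Λ t) * r Λ t * Λ' + ∫ s in (0:ℝ)..Λ, D s) t := by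
    have hF2 : ContDiff ℝ 1 (fun q : ℝ × ℝ => γ (θ q.1 q.2) * r q.1 q.2) :=
      ((hγ.of_le one_le_two).comp (hθ.of_le (by simp))).mul (hr.of_le (by simp))
    have h := leibniz hF2 hL hLpos t
    have hptw : ∀ s : ℝ, fderiv ℝ (fun q : ℝ × ℝ => γ (θ q.1 q.2) * r q.1 q.2) (s, t) (0, 1)
        = D s := by
      intro s
      have ha : HasDerivAt (fun τ => γ (θ s τ) * r s τ)
          (fderiv ℝ (fun q : ℝ × ℝ => γ (θ q.1 q.2) * r q.1 q.2) (s, t) (0, 1)) t :=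
        hasDerivAt_par2 (hF2.differentiable one_ne_zero) s t
      have hb : HasDerivAt (fun τ => γ (θ s τ) * r s τ)
          (deriv γ (θ s t) * Θ2 s * r s t + γ (θ s t) * R2 s) t := by
        have hγθ : HasDerivAt (fun τ => γ (θ s τ)) (deriv γ (θ s t) * Θ2 s) t := by
          simpa [Function.comp_def] using ((hγd (θ s t)).hasDerivAt.comp t (hΘ2h s))
        exact hγθ.mul (hR2h s)
      rw [ha.unique hb, hDdef]
    have hieq : (∫ s in (0:ℝ)..Λ, fderiv ℝ (fun q : ℝ × ℝ => γ (θ q.1 q.2) * r q.1 q.2)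
        (s, t) (0, 1)) = ∫ s in (0:ℝ)..Λ, D s :=
      intervalIntegral.integral_congr (fun s _ => hptw s)
    rw [← hieq]
    convert h using 1
  -- (H4) key pointwise identity
  have hKEY : ∀ s ∈ Set.Ioo (0:ℝ) Λ, D s = Ψ s + Ξ s - r s t * (U1 s) ^ 2 := by
    intro s hs
    have hsIcc : s ∈ Set.Icc (0:ℝ) (L t) := by
      rw [← hΛdef]; exact ⟨hs.1.le, hs.2.le⟩
    by_cases hR0 : r s t = 0
    · -- degenerate case: the axis is touched, everything vanishes
      have hR2s : R2 s = 0 := by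
        have hmin : IsLocalMin (fun τ => r s τ) t :=
          Filter.Eventually.of_forall (fun τ => hR0.le.trans (hrpos s τ))
        have h := hmin.deriv_eq_zero
        rw [(hR2h s).deriv] at h
        exact h
      have hR1s : R1 s = 0 := by
        have hmin : IsLocalMin (fun u => r u t) s :=
          Filter.Eventually.of_forall (fun u => hR0.le.trans (hrpos u t))
        have h := hmin.deriv_eq_zero
        rw [(hR1h s).deriv] at h
        exact h
      simp only [hDdef, hΨdef, hΞdef, hVdef, hTdef]
      rw [hR0, hR1s, hR2s]
      ring
    · -- main case
      have hcoss : R1 s = Real.cos (θ s t) := by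
        have h := (hang t s hsIcc).1; rwa [hR1eq] at h
      have hsins : Z1 s = Real.sin (θ s t) := by
        have h := (hang t s hsIcc).2; rwa [hZ1eq] at h
      have hnb : Set.Ioo (0:ℝ) Λ ∈ nhds s := isOpen_Ioo.mem_nhds hs
      have hIccmem : ∀ u ∈ Set.Ioo (0:ℝ) Λ, u ∈ Set.Icc (0:ℝ) (L t) := by
        intro u hu; rw [← hΛdef]; exact ⟨hu.1.le, hu.2.le⟩
      have hR11s : R11 s = -Real.sin (θ s t) * Θ1 s := by
        have hev : R1 =ᶠ[nhds s] fun u => Real.cos (θ u t) := by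
          filter_upwards [hnb] with u hu
          have h := (hang t u (hIccmem u hu)).1; rwa [hR1eq] at h
        have h2 : HasDerivAt (fun u => Real.cos (θ u t)) (-Real.sin (θ s t) * Θ1 s) s := by
          simpa [Function.comp_def] using (Real.hasDerivAt_cos (θ s t)).comp s (hΘ1h s)
        rw [← (hR11h s).deriv, hev.deriv_eq, h2.deriv]
      have hZ11s : Z11 s = Real.cos (θ s t) * Θ1 s := by
        have hev : Z1 =ᶠ[nhds s] fun u => Real.sin (θ u t) := by
          filter_upwards [hnb] with u hu
          have h := (hang t u (hIccmem u hu)).2; rwa [hZ1eq] at h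
        have h2 : HasDerivAt (fun u => Real.sin (θ u t)) (Real.cos (θ s t) * Θ1 s) s := by
          simpa [Function.comp_def] using (Real.hasDerivAt_sin (θ s t)).comp s (hΘ1h s)
        rw [← (hZ11h s).deriv, hev.deriv_eq, h2.deriv]
      have hopen : IsOpen {τ : ℝ | s < L τ} := isOpen_lt continuous_const hL.continuous
      have htmem : t ∈ {τ : ℝ | s < L τ} := by
        show s < L t; rw [← hΛdef]; exact hs.2
      have hR21s : R21 s = -Real.sin (θ s t) * Θ2 s := by
        have hevτ : (fun τ => fderiv ℝ (uncurry r) (s, τ) ((1:ℝ),(0:ℝ))) =ᶠ[nhds t]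
            fun τ => Real.cos (θ s τ) := by
          filter_upwards [hopen.mem_nhds htmem] with τ hτ
          have h := (hang τ s ⟨hs.1.le, le_of_lt hτ⟩).1
          exact ((hasDerivAt_par1 hrd s τ).deriv).symm.trans h
        have h2 : HasDerivAt (fun τ => Real.cos (θ s τ)) (-Real.sin (θ s t) * Θ2 s) t := by
          simpa [Function.comp_def] using (Real.hasDerivAt_cos (θ s t)).comp t (hΘ2h s)
        have h3 : deriv (fun u => fderiv ℝ (uncurry r) (u, t) ((0:ℝ),(1:ℝ))) s
            = -Real.sin (θ s t) * Θ2 s := by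
          rw [← clairaut' hr s t, hevτ.deriv_eq, h2.deriv]
        rw [← (hR21h s).deriv]
        exact h3
      have hZ21s : Z21 s = Real.cos (θ s t) * Θ2 s := by
        have hevτ : (fun τ => fderiv ℝ (uncurry z) (s, τ) ((1:ℝ),(0:ℝ))) =ᶠ[nhds t]
            fun τ => Real.sin (θ s τ) := by
          filter_upwards [hopen.mem_nhds htmem] with τ hτ
          have h := (hang τ s ⟨hs.1.le, le_of_lt hτ⟩).2
          exact ((hasDerivAt_par1 hzd s τ).deriv).symm.trans h
        have h2 : HasDerivAt (fun τ => Real.sin (θ s τ)) (Real.cos (θ s t) * Θ2 s) t := by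
          simpa [Function.comp_def] using (Real.hasDerivAt_sin (θ s t)).comp t (hΘ2h s)
        have h3 : deriv (fun u => fderiv ℝ (uncurry z) (u, t) ((0:ℝ),(1:ℝ))) s
            = Real.cos (θ s t) * Θ2 s := by
          rw [← clairaut' hz s t, hevτ.deriv_eq, h2.deriv]
        rw [← (hZ21h s).deriv]
        exact h3
      have hE3 : κ s t = -((-Real.sin (θ s t) * Θ1 s) * (-Real.sin (θ s t))
          + (Real.cos (θ s t) * Θ1 s) * Real.cos (θ s t)) := by
        have h := hκ t s hsIcc
        rw [hR1eq, hZ1eq, (hR11h s).deriv, (hZ11h s).deriv, hR11s, hZ11s, hcoss, hsins] at h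
        exact h
      have hE2 : μ s t * r s t = (γ (θ s t) + deriv (deriv γ) (θ s t)) * κ s t * r s t
          - (γ (θ s t) * Real.sin (θ s t) + deriv γ (θ s t) * Real.cos (θ s t)) := by
        have h := hchem t s hsIcc
        rw [hR1eq, hZ1eq, hcoss, hsins] at h
        rw [h]
        field_simp
      have hE1 : r s t * (-Real.sin (θ s t) * R2 s + Real.cos (θ s t) * Z2 s)
          = Real.cos (θ s t) * U1 s + r s t * U11 s := by
        have h := hevol t s hsIcc
        have hd : deriv (fun u => r u t * deriv (fun v => μ v t) u) s
            = R1 s * U1 s + r s t * U11 s := by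
          rw [hU1eq]
          exact HasDerivAt.deriv (by exact (hR1h s).mul (hU11h s))
        rw [hR1eq, hZ1eq, (hR2h s).deriv, (hZ2h s).deriv, hd, hcoss, hsins] at h
        rw [h]
        field_simp
      have hpy := Real.sin_sq_add_cos_sq (θ s t)
      simp only [hDdef, hΨdef, hΞdef, hVdef, hTdef]
      rw [hcoss, hsins, hR11s, hZ11s, hR21s, hZ21s]
      linear_combination μ s t * hE1
        - (-Real.sin (θ s t) * R2 s + Real.cos (θ s t) * Z2 s) * hE2
        - ((γ (θ s t) + deriv (deriv γ) (θ s t)) * r s t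
            * (-Real.sin (θ s t) * R2 s + Real.cos (θ s t) * Z2 s)) * hE3
        - (deriv γ (θ s t) * r s t * Θ2 s + γ (θ s t) * R2 s
            - (γ (θ s t) + deriv (deriv γ) (θ s t)) * Θ1 s * r s t
              * (-Real.sin (θ s t) * R2 s + Real.cos (θ s t) * Z2 s)) * hpy
  -- (H5) the integral identity
  have hInt : (∫ s in (0:ℝ)..Λ, D s)
      = -(∫ s in (0:ℝ)..Λ, r s t * (U1 s) ^ 2) + (Φ Λ - Φ 0) := by
    have hU1Λ : U1 Λ = 0 := by
      have h := (hflux t).2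
      rw [hU1eq] at h
      rw [hΛdef]; exact h
    have hU10 : U1 0 = 0 := by
      have h := (hflux t).1
      rwa [hU1eq] at h
    have hFTCΦ : ∫ s in (0:ℝ)..Λ, Ψ s = Φ Λ - Φ 0 :=
      intervalIntegral.integral_eq_sub_of_hasDerivAt (fun s _ => hΦΨ s)
        (hcΨ.intervalIntegrable 0 Λ)
    have hFTCΞ : ∫ s in (0:ℝ)..Λ, Ξ s = 0 := by
      have h := intervalIntegral.integral_eq_sub_of_hasDerivAt (f := fun u => μ u t * (r u t * U1 u))
        (fun s (_ : s ∈ Set.uIcc (0:ℝ) Λ) => hΞh s) (hcΞ.intervalIntegrable 0 Λ)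
      rw [h]
      simp only [hU1Λ, hU10]
      ring
    have hae : ∀ᵐ x ∂MeasureTheory.volume, x ∈ Set.uIoc (0:ℝ) Λ →
        D x = Ψ x + Ξ x - r x t * (U1 x) ^ 2 := by
      have h1 : ∀ᵐ (x : ℝ) ∂MeasureTheory.volume, x ≠ Λ := by
        rw [MeasureTheory.ae_iff]
        simpa using MeasureTheory.measure_singleton (μ := MeasureTheory.volume) Λ
      filter_upwards [h1] with x hx hmem
      rw [Set.uIoc_of_le hΛpos.le] at hmem
      exact hKEY x ⟨hmem.1, lt_of_le_of_ne hmem.2 hx⟩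
    rw [intervalIntegral.integral_congr_ae hae, intervalIntegral.integral_sub (f := fun x => Ψ x + Ξ x) (g := fun x => r x t * U1 x ^ 2)
      ((hcΨ.add hcΞ).intervalIntegrable 0 Λ) ((hcr.mul (hcU1.pow 2)).intervalIntegrable 0 Λ),
      intervalIntegral.integral_add (hcΨ.intervalIntegrable 0 Λ) (hcΞ.intervalIntegrable 0 Λ),
      hFTCΦ, hFTCΞ]
    ring
  -- (H6) boundary derivative facts
  set ρo : ℝ := fderiv ℝ (uncurry r) (Λ, t) ((Λ', 1) : ℝ × ℝ) with hρodef
  have hro : HasDerivAt (fun τ => r (L τ) τ) ρo t := hasDerivAt_alongL hrd hLd t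
  have hρo : ρo = R1 Λ * Λ' + R2 Λ := by
    rw [hρodef, fderiv_pair]; ring
  have hri : HasDerivAt (fun τ => r 0 τ) (R2 0) t := hR2h 0
  have hmemΛ : Λ ∈ Set.Icc (0:ℝ) (L t) := by
    rw [← hΛdef]; exact Set.right_mem_Icc.mpr hΛpos.le
  have hcosΛ : R1 Λ = Real.cos (θ Λ t) := by
    have h := (hang t Λ hmemΛ).1; rwa [hR1eq] at h
  have hsinΛ : Z1 Λ = Real.sin (θ Λ t) := by
    have h := (hang t Λ hmemΛ).2; rwa [hZ1eq] at h
  have hZtΛ : Z2 Λ = -Real.sin (θ Λ t) * Λ' := by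
    have hzL : HasDerivAt (fun τ => z (L τ) τ)
        (fderiv ℝ (uncurry z) (Λ, t) ((Λ', 1) : ℝ × ℝ)) t := hasDerivAt_alongL hzd hLd t
    have hzconst : (fun τ => z (L τ) τ) = fun _ => (0:ℝ) := funext fun τ => (hsub τ).2
    rw [hzconst] at hzL
    have h0 : fderiv ℝ (uncurry z) (Λ, t) ((Λ', 1) : ℝ × ℝ) = 0 :=
      hzL.unique (hasDerivAt_const t 0)
    rw [fderiv_pair] at h0
    have h0' : Λ' * Z1 Λ + Z2 Λ = 0 := h0
    rw [hsinΛ] at h0'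
    linear_combination h0'
  have hZt0 : Z2 0 = 0 := by
    have hzc : (fun τ => z 0 τ) = fun _ => (0:ℝ) := funext fun τ => (hsub τ).1
    have hc := hasDerivAt_const t (0:ℝ)
    rw [← hzc] at hc
    exact (hZ2h 0).unique hc
  -- (H7)(H8) boundary term evaluations
  have hBo : γ (θ Λ t) * r Λ t * Λ' + Φ Λ = r Λ t * ρo * σ - r Λ t * ρo ^ 2 / η := by
    have hR2Λ : R2 Λ = ρo - Real.cos (θ Λ t) * Λ' := by
      rw [hcosΛ] at hρo; linear_combination -hρo
    have hc := hclo t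
    rw [hro.deriv, ← hΛdef] at hc
    have hpy := Real.sin_sq_add_cos_sq (θ Λ t)
    simp only [hΦdef, hVdef, hTdef]
    rw [hcosΛ, hsinΛ, hZtΛ, hR2Λ]
    have hangle : γ (θ Λ t) * Real.cos (θ Λ t) - deriv γ (θ Λ t) * Real.sin (θ Λ t)
        = σ - ρo / η := by
      field_simp
      linear_combination hc
    linear_combination (r Λ t * ρo) * hangle - γ (θ Λ t) * r Λ t * Λ' * hpy
  have hBi : Φ 0 = r 0 t * R2 0 * σ + r 0 t * (R2 0) ^ 2 / η := by
    have hmem0 : (0:ℝ) ∈ Set.Icc (0:ℝ) (L t) := Set.left_mem_Icc.mpr (hLpos t).le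
    have hcos0 : R1 0 = Real.cos (θ 0 t) := by
      have h := (hang t 0 hmem0).1; rwa [hR1eq] at h
    have hsin0 : Z1 0 = Real.sin (θ 0 t) := by
      have h := (hang t 0 hmem0).2; rwa [hZ1eq] at h
    have hc := hcli t
    rw [hri.deriv] at hc
    simp only [hΦdef, hVdef, hTdef]
    rw [hcos0, hsin0, hZt0]
    have hangle0 : γ (θ 0 t) * Real.cos (θ 0 t) - deriv γ (θ 0 t) * Real.sin (θ 0 t)
        = σ + R2 0 / η := by
      field_simp
      linear_combination -hc
    linear_combination (r 0 t * R2 0) * hangle0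
  -- assemble the full derivative
  have hW : HasDerivAt (fun τ => 2 * Real.pi * (∫ s in (0:ℝ)..(L τ), γ (θ s τ) * r s τ)
      - σ * Real.pi * ((r (L τ) τ) ^ 2 - (r 0 τ) ^ 2))
      (2 * Real.pi * (γ (θ Λ t) * r Λ t * Λ' + ∫ s in (0:ℝ)..Λ, D s)
        - σ * Real.pi * ((2 : ℕ) * (r (L t) t) ^ 1 * ρo - (2 : ℕ) * (r 0 t) ^ 1 * R2 0)) t := by
    exact ((hLeib.const_mul _).sub (((hro.pow 2).sub (hri.pow 2)).const_mul _))
  have hInonneg : 0 ≤ ∫ s in (0:ℝ)..Λ, r s t * (U1 s) ^ 2 := by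
    apply intervalIntegral.integral_nonneg (le_of_lt hΛpos)
    intro u _
    exact mul_nonneg (hrpos u t) (sq_nonneg _)
  have hmain : deriv (fun τ => 2 * Real.pi * (∫ s in (0:ℝ)..(L τ), γ (θ s τ) * r s τ)
        - σ * Real.pi * ((r (L τ) τ) ^ 2 - (r 0 τ) ^ 2)) t
      = -(2 * Real.pi) * (∫ s in (0:ℝ)..(L t), r s t * (deriv (fun v => μ v t) s) ^ 2)
        - (2 * Real.pi / η) * (r (L t) t * (deriv (fun τ => r (L τ) τ) t) ^ 2
            + r 0 t * (deriv (fun τ => r 0 τ) t) ^ 2) := by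
    rw [hW.deriv, hro.deriv, hri.deriv, hU1eq, hInt]
    rw [← hΛdef]
    have hexp : γ (θ Λ t) * r Λ t * Λ' + (-(∫ s in (0:ℝ)..Λ, r s t * U1 s ^ 2) + (Φ Λ - Φ 0))
        = -(∫ s in (0:ℝ)..Λ, r s t * U1 s ^ 2)
          + (r Λ t * ρo * σ - r Λ t * ρo ^ 2 / η)
          - (r 0 t * R2 0 * σ + r 0 t * (R2 0) ^ 2 / η) := by
      rw [← hBo, hBi]; ring
    rw [hexp]
    push_cast
    field_simp
    ring
  refine ⟨hmain, ?_⟩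
  rw [hmain, hro.deriv, hri.deriv, hU1eq]
  have h1 : 0 ≤ r (L t) t * ρo ^ 2 + r 0 t * (R2 0) ^ 2 :=
    add_nonneg (mul_nonneg (hrpos _ _) (sq_nonneg _)) (mul_nonneg (hrpos _ _) (sq_nonneg _))
  have h2 : (0:ℝ) < 2 * Real.pi := by positivity
  have h3 : (0:ℝ) < 2 * Real.pi / η := by positivity
  rw [← hΛdef]
  nlinarith [hInonneg, h1, h2, h3]
end
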